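/- Let H be an N_r×N_t complex matrix, σ_n² > 0, and let P be an N_t×K complex matrix with rank(HP) = K. Set N(P) = σ_n² (Pᴴ Hᴴ H P)^{-1} with Cholesky factor L(P) and l(P) = (ln L(P)₁₁², …, ln L(P)_KK²). Then there exists a K×K unitary matrix W such that P' = P W satisfies: (i) tr(P'ᴴP') = tr(PᴴP); (ii) N(P') is a diagonal matrix whose diagonal entries are the eigenvalues of N(P), so its Cholesky factor is diagonal (corresponding to zero-forcing linear equalization, i.e., feedback matrix B = 0); and (iii) for every Schur-concave function g : ℝ^K → ℝ, g(l(P')) ≤ g(l(P)). -/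

import Mathlib

/-!
Take `W` to be the eigenvector unitary of `N(P) = L Lᴴ`: then `N(PW) = Wᴴ N(P) W` is the
diagonal matrix of eigenvalues `λ`, and the power `tr(PᴴP)` is unchanged. It remains to show
`log |L_kk|² ≺ log λ`. For an index set `S` of size `m`, `L_SS` is lower triangular, so by
Cauchy–Binet `∏_{k∈S} |L_kk|² ≤ det N_SS`. Writing `N = V Λ Vᴴ`, Cauchy–Binet again expresses
`det N_SS` as an average of the products `∏_{t∈T} λ_t` over `|T| = m` with weights `|det V_ST|²`,
which sum to `det (V Vᴴ)_SS = 1`; each such product is at most the product of the `m` largest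
eigenvalues. The total sums agree because `det N = |det L|²`.
-/

open Matrix BigOperators
open scoped ComplexOrder

def IsMajorizedBy {K : ℕ} (a b : Fin K → ℝ) : Prop :=
  ∃ σ τ : Equiv.Perm (Fin K),
    Antitone (a ∘ σ) ∧ Antitone (b ∘ τ) ∧
    (∀ j : ℕ, j < K →
      ∑ i ∈ Finset.univ.filter (fun i : Fin K => (i : ℕ) ≤ j), a (σ i) ≤
        ∑ i ∈ Finset.univ.filter (fun i : Fin K => (i : ℕ) ≤ j), b (τ i)) ∧
    (∑ i, a i) = (∑ i, b i)

def SchurConcave {K : ℕ} (g : (Fin K → ℝ) → ℝ) : Prop :=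
  ∀ a b : Fin K → ℝ, IsMajorizedBy a b → g b ≤ g a

open Finset Equiv Function

namespace Fin

variable {m K : ℕ}

theorem strictMono_comp_sort {p : Fin m → Fin K} (hp : Injective p) :
    StrictMono (p ∘ Tuple.sort p) :=
  (Tuple.monotone_sort p).strictMono_of_injective (hp.comp (Tuple.sort p).injective)

theorem val_le_val_of_strictMono {e : Fin m → Fin K} (he : StrictMono e) (i : Fin m) :
    (i : ℕ) ≤ e i := by
  obtain ⟨i, hi⟩ := i
  induction i with
  | zero => exact Nat.zero_le _
  | succ n ih => exact (ih (by omega)).trans_lt (Fin.lt_def.1 (he (Fin.mk_lt_mk.2 n.lt_succ_self)))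

theorem sum_injective_eq_sum_strictMono_sum_perm {M : Type*} [AddCommMonoid M]
    (f : (Fin m → Fin K) → M) :
    ∑ p ∈ univ.filter Injective, f p =
      ∑ q ∈ univ.filter StrictMono, ∑ σ : Perm (Fin m), f (q ∘ σ) := by
  rw [← sum_product' (f := fun (q : Fin m → Fin K) (σ : Perm (Fin m)) => f (q ∘ σ))]
  symm
  refine sum_bij (fun x _ => x.1 ∘ x.2) ?_ ?_ ?_ fun _ _ => rfl
  · rintro ⟨q, σ⟩ hx
    simp only [mem_product, mem_filter, mem_univ, true_and] at hx ⊢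
    exact hx.1.injective.comp σ.injective
  · rintro ⟨q, σ⟩ hx ⟨q', σ'⟩ hx' h
    simp only [mem_product, mem_filter, mem_univ, true_and, and_true] at hx hx' h
    have hq : q = q' := by
      rw [← hx.range_inj hx', ← EquivLike.range_comp q σ, ← EquivLike.range_comp q' σ', h]
    subst hq
    exact Prod.ext rfl (Equiv.ext fun i => hx.injective (congrFun h i))
  · intro p hp
    simp only [mem_filter, mem_univ, true_and] at hp
    exact ⟨(p ∘ Tuple.sort p, (Tuple.sort p)⁻¹), by simpa using strictMono_comp_sort hp,
      by ext i; simp⟩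

@[to_additive]
theorem prod_filter_val_lt {M : Type*} [CommMonoid M] (hm : m ≤ K) (f : Fin K → M) :
    ∏ i ∈ univ.filter (fun i : Fin K => (i : ℕ) < m), f i = ∏ i : Fin m, f (castLE hm i) := by
  rw [← prod_image fun _ _ _ _ h => castLE_injective hm h]
  congr 1
  ext i
  simpa using ⟨fun hi => ⟨⟨i, hi⟩, rfl⟩, by rintro ⟨j, rfl⟩; exact j.2⟩

theorem prod_comp_le_prod_filter_val_lt {f : Fin K → ℝ} (hf₀ : ∀ i, 0 ≤ f i) (hf : Antitone f)
    {q : Fin m → Fin K} (hq : Injective q) :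
    ∏ j, f (q j) ≤ ∏ i ∈ univ.filter (fun i : Fin K => (i : ℕ) < m), f i := by
  have hm : m ≤ K := by simpa using Fintype.card_le_of_injective q hq
  rw [← Equiv.prod_comp (Tuple.sort q), prod_filter_val_lt hm]
  exact prod_le_prod (fun _ _ => hf₀ _) fun j _ =>
    hf (le_def.2 (val_le_val_of_strictMono (strictMono_comp_sort hq) j))

theorem exists_perm_antitone_comp {α : Type*} [LinearOrder α] (f : Fin K → α) :
    ∃ σ : Perm (Fin K), Antitone (f ∘ σ) :=
  ⟨Tuple.sort (OrderDual.toDual ∘ f), monotone_toDual_comp_iff.1 (Tuple.monotone_sort _)⟩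

end Fin

namespace Matrix

section CauchyBinet

variable {R : Type*} [CommRing R] {m K : ℕ}

theorem det_mul_eq_sum_det_submatrix_mul_prod (A : Matrix (Fin m) (Fin K) R)
    (B : Matrix (Fin K) (Fin m) R) :
    (A * B).det = ∑ p : Fin m → Fin K, (A.submatrix id p).det * ∏ i, B (p i) i := by
  simp only [det_apply', mul_apply, prod_univ_sum, Fintype.piFinset_univ, Finset.mul_sum,
    Finset.sum_mul]
  rw [Finset.sum_comm]
  refine sum_congr rfl fun p _ => sum_congr rfl fun σ _ => ?_
  simp only [submatrix_apply, id_eq, prod_mul_distrib, mul_assoc]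

theorem det_submatrix_eq_zero_of_not_injective (A : Matrix (Fin m) (Fin K) R)
    {p : Fin m → Fin K} (hp : ¬Injective p) : (A.submatrix id p).det = 0 := by
  obtain ⟨i, j, hij, hne⟩ : ∃ i j, p i = p j ∧ i ≠ j := by simpa [Injective] using hp
  exact det_zero_of_column_eq hne fun k => by simp [hij]

theorem det_mul_eq_sum_det_submatrix_mul_det_submatrix (A : Matrix (Fin m) (Fin K) R)
    (B : Matrix (Fin K) (Fin m) R) :
    (A * B).det =
      ∑ q ∈ univ.filter StrictMono, (A.submatrix id q).det * (B.submatrix q id).det := by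
  rw [det_mul_eq_sum_det_submatrix_mul_prod, ← sum_filter_of_ne fun p _ hp =>
      not_not.1 fun hinj => hp (by rw [det_submatrix_eq_zero_of_not_injective A hinj, zero_mul]),
    Fin.sum_injective_eq_sum_strictMono_sum_perm]
  refine sum_congr rfl fun q _ => ?_
  have hperm (σ : Perm (Fin m)) :
      A.submatrix id (q ∘ σ) = (A.submatrix id q).submatrix id σ := rfl
  simp only [hperm, det_permute', det_apply' (B.submatrix q id), Finset.mul_sum]
  exact sum_congr rfl fun σ _ => by simp only [submatrix_apply, id_eq, Function.comp_apply]; ring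

end CauchyBinet

variable {m K : ℕ}

theorem det_mul_diagonal_mul_conjTranspose_eq_sum (M : Matrix (Fin m) (Fin K) ℂ)
    (w : Fin K → ℝ) :
    (M * diagonal (fun k => (w k : ℂ)) * Mᴴ).det =
      ((∑ q ∈ univ.filter StrictMono,
        Complex.normSq (M.submatrix id q).det * ∏ j, w (q j) : ℝ) : ℂ) := by
  rw [det_mul_eq_sum_det_submatrix_mul_det_submatrix, Complex.ofReal_sum]
  refine sum_congr rfl fun q _ => ?_
  have hcols : (M * diagonal fun k => (w k : ℂ)).submatrix id q =
      M.submatrix id q * diagonal fun j => (w (q j) : ℂ) := by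
    ext i j
    simp [mul_diagonal]
  rw [hcols, ← conjTranspose_submatrix, det_mul, det_diagonal, det_conjTranspose,
    Complex.star_def, mul_right_comm, Complex.mul_conj]
  push_cast
  rfl

theorem det_mul_conjTranspose_eq_sum (M : Matrix (Fin m) (Fin K) ℂ) :
    (M * Mᴴ).det =
      ((∑ q ∈ univ.filter StrictMono, Complex.normSq (M.submatrix id q).det : ℝ) : ℂ) := by
  simpa using det_mul_diagonal_mul_conjTranspose_eq_sum M 1

theorem prod_normSq_le_re_det_submatrix_mul_conjTranspose {L : Matrix (Fin K) (Fin K) ℂ}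
    (hL : L.IsLowerTriangular) {e : Fin m → Fin K} (he : StrictMono e) :
    ∏ i, Complex.normSq (L (e i) (e i)) ≤ ((L * Lᴴ).submatrix e e).det.re := by
  rw [submatrix_mul _ _ _ _ _ bijective_id, ← conjTranspose_submatrix,
    det_mul_conjTranspose_eq_sum, Complex.ofReal_re]
  have hdet : ((L.submatrix e id).submatrix id e).det = ∏ i, L (e i) (e i) :=
    det_of_isLowerTriangular _ fun _ _ hij => hL (he hij)
  calc ∏ i, Complex.normSq (L (e i) (e i))
      = Complex.normSq ((L.submatrix e id).submatrix id e).det := by rw [hdet, map_prod]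
    _ ≤ _ := single_le_sum (f := fun q => Complex.normSq ((L.submatrix e id).submatrix id q).det)
        (fun q _ => Complex.normSq_nonneg _) (mem_filter.2 ⟨mem_univ _, he⟩)

theorem re_det_submatrix_mul_diagonal_mul_conjTranspose_le {V : Matrix (Fin K) (Fin K) ℂ}
    (hV : V * Vᴴ = 1) (w : Fin K → ℝ) {e : Fin m → Fin K} (he : Injective e) {C : ℝ}
    (hC : ∀ q : Fin m → Fin K, Injective q → ∏ j, w (q j) ≤ C) :
    ((V * diagonal (fun k => (w k : ℂ)) * Vᴴ).submatrix e e).det.re ≤ C := by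
  set Vr := V.submatrix e id
  have hVr : (V * diagonal (fun k => (w k : ℂ)) * Vᴴ).submatrix e e =
      Vr * diagonal (fun k => (w k : ℂ)) * Vrᴴ := by
    rw [submatrix_mul _ _ _ _ _ bijective_id, submatrix_mul _ _ _ _ _ bijective_id,
      submatrix_id_id, conjTranspose_submatrix]
  have hweights : ∑ q ∈ univ.filter StrictMono, Complex.normSq (Vr.submatrix id q).det = 1 := by
    have h := det_mul_conjTranspose_eq_sum Vr
    rw [conjTranspose_submatrix, ← submatrix_mul _ _ _ _ _ bijective_id, hV,
      submatrix_one _ he, det_one] at h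
    exact_mod_cast h.symm
  rw [hVr, det_mul_diagonal_mul_conjTranspose_eq_sum, Complex.ofReal_re]
  calc _ ≤ ∑ q ∈ univ.filter StrictMono, Complex.normSq (Vr.submatrix id q).det * C :=
        sum_le_sum fun q hq => mul_le_mul_of_nonneg_left
          (hC q (mem_filter.1 hq).2.injective) (Complex.normSq_nonneg _)
    _ = C := by rw [← sum_mul, hweights, one_mul]

section Cholesky

variable {L V : Matrix (Fin K) (Fin K) ℂ} {w : Fin K → ℝ}

theorem prod_normSq_diag_le_prod_filter_val_lt (hL : L.IsLowerTriangular) (hV : V * Vᴴ = 1)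
    (hw₀ : ∀ k, 0 ≤ w k) (hLV : L * Lᴴ = V * diagonal (fun k => (w k : ℂ)) * Vᴴ)
    {τ : Perm (Fin K)} (hτ : Antitone (w ∘ τ)) {p : Fin m → Fin K} (hp : Injective p) :
    ∏ i, Complex.normSq (L (p i) (p i)) ≤
      ∏ i ∈ univ.filter (fun i : Fin K => (i : ℕ) < m), w (τ i) := by
  have he := Fin.strictMono_comp_sort hp
  calc ∏ i, Complex.normSq (L (p i) (p i))
      = ∏ i, Complex.normSq (L ((p ∘ Tuple.sort p) i) ((p ∘ Tuple.sort p) i)) :=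
        (Equiv.prod_comp (Tuple.sort p) _).symm
    _ ≤ ((L * Lᴴ).submatrix _ _).det.re := prod_normSq_le_re_det_submatrix_mul_conjTranspose hL he
    _ ≤ _ := by
      rw [hLV]
      refine re_det_submatrix_mul_diagonal_mul_conjTranspose_le hV w he.injective fun q hq => ?_
      simpa using Fin.prod_comp_le_prod_filter_val_lt (fun i => hw₀ (τ i)) hτ
        (q := fun j => τ.symm (q j)) (τ.symm.injective.comp hq)

theorem prod_normSq_diag_eq_prod (hL : L.IsLowerTriangular) (hV : V * Vᴴ = 1)
    (hLV : L * Lᴴ = V * diagonal (fun k => (w k : ℂ)) * Vᴴ) :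
    ∏ k, Complex.normSq (L k k) = ∏ k, w k := by
  have hVdet : V.det * Vᴴ.det = 1 := by rw [← det_mul, hV, det_one]
  have h := congrArg det hLV
  rw [det_mul, det_mul, det_mul, det_diagonal, mul_right_comm, hVdet, one_mul,
    det_conjTranspose, Complex.star_def, Complex.mul_conj, det_of_isLowerTriangular L hL,
    map_prod] at h
  exact_mod_cast h

theorem isMajorizedBy_log_normSq_diag (hL : L.IsLowerTriangular) (hV : V * Vᴴ = 1)
    (hw : ∀ k, 0 < w k) (hLV : L * Lᴴ = V * diagonal (fun k => (w k : ℂ)) * Vᴴ) :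
    IsMajorizedBy (fun k => Real.log (Complex.normSq (L k k))) (fun k => Real.log (w k)) := by
  have hprod := prod_normSq_diag_eq_prod hL hV hLV
  have hdiag (k : Fin K) : 0 < Complex.normSq (L k k) :=
    (Complex.normSq_nonneg _).lt_of_ne' fun h0 =>
      (prod_pos fun k _ => hw k).ne' (hprod ▸ prod_eq_zero (mem_univ k) h0)
  obtain ⟨σ, hσ⟩ := Fin.exists_perm_antitone_comp fun k => Real.log (Complex.normSq (L k k))
  obtain ⟨τ, hτ⟩ := Fin.exists_perm_antitone_comp w
  refine ⟨σ, τ, hσ, fun i j hij => Real.log_le_log (hw _) (hτ hij), fun j hj => ?_, ?_⟩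
  · simp only [← Nat.lt_succ_iff]
    rw [Fin.sum_filter_val_lt hj (fun i => Real.log (Complex.normSq (L (σ i) (σ i)))),
      ← Real.log_prod fun i _ => (hdiag _).ne', ← Real.log_prod fun i _ => (hw _).ne']
    exact Real.log_le_log (prod_pos fun i _ => hdiag _) <| prod_normSq_diag_le_prod_filter_val_lt
      hL hV (fun k => (hw k).le) hLV hτ (σ.injective.comp (Fin.castLE_injective hj))
  · rw [← Real.log_prod fun k _ => (hdiag k).ne', ← Real.log_prod fun k _ => (hw k).ne', hprod]

end Cholesky

end Matrix

theorem exists_unitary_diagonalizing_schurConcave_general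
    {Nr Nt K : ℕ}
    (H : Matrix (Fin Nr) (Fin Nt) ℂ) (P : Matrix (Fin Nt) (Fin K) ℂ)
    (σn2 : ℝ)
    (LP : Matrix (Fin K) (Fin K) ℂ)
    (hLPtri : ∀ i j : Fin K, i < j → LP i j = 0)
    (hLPdiag : ∀ i : Fin K, 0 < (LP i i).re ∧ (LP i i).im = 0)
    (hLP : (σn2 : ℂ) • (Pᴴ * Hᴴ * H * P)⁻¹ = LP * LPᴴ) :
    ∃ W ∈ Matrix.unitaryGroup (Fin K) ℂ,
      ((P * W)ᴴ * (P * W)).trace = (Pᴴ * P).trace ∧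
      ∃ d : Fin K → ℝ, (∀ k, 0 < d k) ∧
        (σn2 : ℂ) • ((P * W)ᴴ * Hᴴ * H * (P * W))⁻¹ =
          Matrix.diagonal (fun k => (d k : ℂ)) ∧
        ((σn2 : ℂ) • (Pᴴ * Hᴴ * H * P)⁻¹).charpoly =
          ∏ k : Fin K, (Polynomial.X - Polynomial.C ((d k : ℂ))) ∧
        ∀ g : (Fin K → ℝ) → ℝ, SchurConcave g →
          g (fun k => Real.log (d k)) ≤
            g (fun k => Real.log ((LP k k).re ^ 2)) := by
  have hL : LP.IsLowerTriangular := fun i j hij => hLPtri i j hij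
  have hLP_isUnit : IsUnit LP := by
    rw [isUnit_iff_isUnit_det, det_of_isLowerTriangular LP hL, isUnit_iff_ne_zero,
      prod_ne_zero_iff]
    exact fun k _ h => (hLPdiag k).1.ne' (by simp [h])
  have hN : (LP * LPᴴ).PosDef :=
    PosDef.mul_conjTranspose_self LP (vecMul_injective_iff_isUnit.2 hLP_isUnit)
  have hW := hN.isHermitian.eigenvectorUnitary.2
  set W : Matrix (Fin K) (Fin K) ℂ := ↑hN.isHermitian.eigenvectorUnitary
  set d := hN.isHermitian.eigenvalues
  have hWW : W * Wᴴ = 1 := mem_unitaryGroup_iff.1 hW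
  have hWW' : Wᴴ * W = 1 := mem_unitaryGroup_iff'.1 hW
  have hspec : LP * LPᴴ = W * diagonal (fun k => (d k : ℂ)) * Wᴴ :=
    hN.isHermitian.spectral_theorem
  have hdiagonal : Wᴴ * (LP * LPᴴ) * W = diagonal (fun k => (d k : ℂ)) := by
    rw [hspec, ← Matrix.mul_assoc, ← Matrix.mul_assoc, hWW', Matrix.one_mul, Matrix.mul_assoc,
      hWW', Matrix.mul_one]
  refine ⟨W, hW, ?_, d, hN.eigenvalues_pos, ?_, hLP ▸ hN.isHermitian.charpoly_eq,
    fun g hg => hg _ _ ?_⟩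
  · rw [conjTranspose_mul, Matrix.mul_assoc, trace_mul_comm, Matrix.mul_assoc, Matrix.mul_assoc,
      hWW, Matrix.mul_one]
  · have hconj : (P * W)ᴴ * Hᴴ * H * (P * W) = Wᴴ * (Pᴴ * Hᴴ * H * P) * W := by
      simp only [conjTranspose_mul, Matrix.mul_assoc]
    rw [hconj, Matrix.mul_inv_rev, Matrix.mul_inv_rev, inv_eq_left_inv hWW', inv_eq_left_inv hWW,
      ← Matrix.mul_smul, ← Matrix.smul_mul, hLP, ← Matrix.mul_assoc, hdiagonal]
  · have hnormSq (k : Fin K) : Complex.normSq (LP k k) = (LP k k).re ^ 2 := by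
      simp [Complex.normSq_apply, (hLPdiag k).2, sq]
    simpa only [hnormSq] using
      isMajorizedBy_log_normSq_diag hL hWW hN.eigenvalues_pos hspec

/-- Schur-concave part of Theorem 1.  There is a unitary `W`
such that `P' = P W` uses the same power as `P`, makes
`N(P') = σ_n² (P'ᴴHᴴHP')⁻¹` a diagonal matrix whose (positive) diagonal
entries are the eigenvalues of `N(P)` (so the Cholesky factor of `N(P')` is
diagonal, i.e. the feedback matrix is `B = 0`), and for every Schur-concave
`g` satisfies `g(l(P')) ≤ g(l(P))`. -/
theorem exists_unitary_diagonalizing_schurConcave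
    {Nr Nt K : ℕ}
    (H : Matrix (Fin Nr) (Fin Nt) ℂ) (P : Matrix (Fin Nt) (Fin K) ℂ)
    (hrank : (H * P).rank = K) (σn2 : ℝ) (hσn2 : 0 < σn2)
    (LP : Matrix (Fin K) (Fin K) ℂ)
    (hLPtri : ∀ i j : Fin K, i < j → LP i j = 0)
    (hLPdiag : ∀ i : Fin K, 0 < (LP i i).re ∧ (LP i i).im = 0)
    (hLP : (σn2 : ℂ) • (Pᴴ * Hᴴ * H * P)⁻¹ = LP * LPᴴ) :
    ∃ W ∈ Matrix.unitaryGroup (Fin K) ℂ,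
      ((P * W)ᴴ * (P * W)).trace = (Pᴴ * P).trace ∧
      ∃ d : Fin K → ℝ, (∀ k, 0 < d k) ∧
        (σn2 : ℂ) • ((P * W)ᴴ * Hᴴ * H * (P * W))⁻¹ =
          Matrix.diagonal (fun k => (d k : ℂ)) ∧
        ((σn2 : ℂ) • (Pᴴ * Hᴴ * H * P)⁻¹).charpoly =
          ∏ k : Fin K, (Polynomial.X - Polynomial.C ((d k : ℂ))) ∧
        ∀ g : (Fin K → ℝ) → ℝ, SchurConcave g →
          g (fun k => Real.log (d k)) ≤
            g (fun k => Real.log ((LP k k).re ^ 2)) :=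
  exists_unitary_diagonalizing_schurConcave_general H P σn2 LP hLPtri hLPdiag hLP
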